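/- Let 1 < p, q < ∞, 0 ≤ λ < 1/n with λ = 1/p - 1/q. If both commutators 𝓗_b and 𝓗*_b are bounded from L^p(ℝⁿ) to L^q(ℝⁿ) with norms at most M, then b ∈ CBMO^{q,λ}(ℝⁿ) with ‖b‖_{CBMO^{q,λ}} ≤ C·M, for a constant C depending only on n, p, q. -/

import Mathlib

open MeasureTheory Metric ENNReal

noncomputable section

lemma aux_phi_meas {n : ℕ} (b : EuclideanSpace ℝ (Fin n) → ℝ)
    (hb : AEStronglyMeasurable b volume) :
    AEStronglyMeasurable (fun x : EuclideanSpace ℝ (Fin n) =>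
      ∫ y in ball (0 : EuclideanSpace ℝ (Fin n)) ‖x‖, b y) volume := by
  have key : (fun x : EuclideanSpace ℝ (Fin n) =>
      ∫ y in ball (0 : EuclideanSpace ℝ (Fin n)) ‖x‖, b y)
      = fun x => ∫ y in ball (0 : EuclideanSpace ℝ (Fin n)) ‖x‖, hb.mk b y := by
    funext x
    exact integral_congr_ae (ae_restrict_of_ae hb.ae_eq_mk)
  rw [key]
  have hF : StronglyMeasurable
      (({p : (EuclideanSpace ℝ (Fin n)) × (EuclideanSpace ℝ (Fin n)) | ‖p.2‖ < ‖p.1‖}).indicator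
        (fun p => hb.mk b p.2)) :=
    (hb.stronglyMeasurable_mk.comp_measurable measurable_snd).indicator
      (measurableSet_lt measurable_snd.norm measurable_fst.norm)
  have h2 := hF.integral_prod_right' (ν := volume)
  have h3 : (fun x : EuclideanSpace ℝ (Fin n) =>
      ∫ y, ({p : (EuclideanSpace ℝ (Fin n)) × (EuclideanSpace ℝ (Fin n)) | ‖p.2‖ < ‖p.1‖}).indicator
        (fun p => hb.mk b p.2) (x, y))
      = fun x => ∫ y in ball (0 : EuclideanSpace ℝ (Fin n)) ‖x‖, hb.mk b y := by
    funext x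
    rw [← integral_indicator measurableSet_ball]
    congr 1
    funext y
    by_cases h : ‖y‖ < ‖x‖ <;> simp [Set.indicator, mem_ball_zero_iff, h]
  rw [← h3]
  exact h2.aestronglyMeasurable


/-- The average of `b` over the ball `B(0,r)` in `ℝⁿ`. -/
def ballAvg (n : ℕ) (b : EuclideanSpace ℝ (Fin n) → ℝ) (r : ℝ) : ℝ :=
  ⨍ x in ball (0 : EuclideanSpace ℝ (Fin n)) r, b x

/-- The `L^q(ℝⁿ)` norm of `g` restricted (by indicator) to a set `s`. -/
def indNorm (n : ℕ) (q : ℝ) (s : Set (EuclideanSpace ℝ (Fin n)))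
    (g : EuclideanSpace ℝ (Fin n) → ℝ) : ℝ≥0∞ :=
  eLpNorm (s.indicator g) (ENNReal.ofReal q) volume

/-- `b ∈ CBMO^{q,λ}(ℝⁿ)` with norm at most `N`: for every `r > 0`,
`‖(b - b_{B(0,r)}) χ_{B(0,r)}‖_{L^q} ≤ N |B(0,r)|^λ ‖χ_{B(0,r)}‖_{L^q}`. -/
def CBMOLe (n : ℕ) (q lam N : ℝ) (b : EuclideanSpace ℝ (Fin n) → ℝ) : Prop :=
  ∀ r > 0,
    indNorm n q (ball 0 r) (fun x => b x - ballAvg n b r) ≤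
      ENNReal.ofReal ((volume (ball (0 : EuclideanSpace ℝ (Fin n)) r)).toReal ^ lam * N) *
        indNorm n q (ball 0 r) 1

/-- The `n`-dimensional Hardy operator. -/
def nHardy (n : ℕ) (f : EuclideanSpace ℝ (Fin n) → ℝ) (x : EuclideanSpace ℝ (Fin n)) : ℝ :=
  (‖x‖ ^ n)⁻¹ * ∫ t in ball (0 : EuclideanSpace ℝ (Fin n)) ‖x‖, f t

/-- The dual `n`-dimensional Hardy operator. -/
def nDualHardy (n : ℕ) (f : EuclideanSpace ℝ (Fin n) → ℝ) (x : EuclideanSpace ℝ (Fin n)) : ℝ :=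
  ∫ t in (ball (0 : EuclideanSpace ℝ (Fin n)) ‖x‖)ᶜ, f t / ‖t‖ ^ n

/-- The commutator `𝓗_b f = b 𝓗 f - 𝓗(b f)`. -/
def hardyComm (n : ℕ) (b f : EuclideanSpace ℝ (Fin n) → ℝ) (x : EuclideanSpace ℝ (Fin n)) : ℝ :=
  b x * nHardy n f x - nHardy n (fun y => b y * f y) x

/-- The commutator `𝓗*_b f = b 𝓗* f - 𝓗*(b f)`. -/
def dualHardyComm (n : ℕ) (b f : EuclideanSpace ℝ (Fin n) → ℝ)
    (x : EuclideanSpace ℝ (Fin n)) : ℝ :=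
  b x * nDualHardy n f x - nDualHardy n (fun y => b y * f y) x

/-- Necessity in Theorem 3.1 (unmixed case): if both `𝓗_b` and `𝓗*_b` are bounded from
`L^p(ℝⁿ)` to `L^q(ℝⁿ)` with norms at most `M`, then `b ∈ CBMO^{q,λ}` with norm `≤ C M`. -/
theorem cbmo_of_hardyComm_bounded (n : ℕ) (hn : 0 < n) (p q lam : ℝ) (hp : 1 < p)
    (hq : 1 < q) (hlam0 : 0 ≤ lam) (hlam1 : lam < 1 / n) (hlam : lam = 1 / p - 1 / q) :
    ∃ C : ℝ, 0 < C ∧ ∀ b : EuclideanSpace ℝ (Fin n) → ℝ, LocallyIntegrable b volume →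
      ∀ M : ℝ, 0 ≤ M →
        (∀ f : EuclideanSpace ℝ (Fin n) → ℝ, Measurable f →
          eLpNorm (hardyComm n b f) (ENNReal.ofReal q) volume ≤
            ENNReal.ofReal M * eLpNorm f (ENNReal.ofReal p) volume) →
        (∀ f : EuclideanSpace ℝ (Fin n) → ℝ, Measurable f →
          eLpNorm (dualHardyComm n b f) (ENNReal.ofReal q) volume ≤
            ENNReal.ofReal M * eLpNorm f (ENNReal.ofReal p) volume) →
        CBMOLe n q lam (C * M) b := by
  classical
  have hp0 : (0:ℝ) < p := lt_trans one_pos hp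
  have hq0 : (0:ℝ) < q := lt_trans one_pos hq
  have hQ0 : ENNReal.ofReal q ≠ 0 := by simp [ENNReal.ofReal_eq_zero, not_le, hq0]
  have hP0 : ENNReal.ofReal p ≠ 0 := by simp [ENNReal.ofReal_eq_zero, not_le, hp0]
  have hQ1 : (1:ℝ≥0∞) ≤ ENNReal.ofReal q := ENNReal.one_le_ofReal.mpr hq.le
  set w : ℝ := (volume (ball (0 : EuclideanSpace ℝ (Fin n)) 1)).toReal with hwdef
  have hw0 : 0 < w := ENNReal.toReal_pos (measure_ball_pos volume _ one_pos).ne'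
    measure_ball_lt_top.ne
  refine ⟨2 / w, by positivity, ?_⟩
  intro b hb M hM H1 H2
  intro r hr
  set B := ball (0 : EuclideanSpace ℝ (Fin n)) r with hBdef
  set V := volume B with hVdef
  set v : ℝ := V.toReal with hvdef
  have hVr : V = ENNReal.ofReal (r ^ n) * volume (ball (0 : EuclideanSpace ℝ (Fin n)) 1) := by
    rw [hVdef, hBdef, Measure.addHaar_ball_of_pos _ _ hr, finrank_euclideanSpace_fin]
  have hVtop : V ≠ ∞ := measure_ball_lt_top.ne
  have hVne : V ≠ 0 := (measure_ball_pos volume _ hr).ne'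
  have hv : v = r ^ n * w := by
    rw [hvdef, hVr, ENNReal.toReal_mul, ENNReal.toReal_ofReal (by positivity), hwdef]
  have hv0 : 0 < v := by rw [hv]; positivity
  set f₁ : EuclideanSpace ℝ (Fin n) → ℝ := B.indicator (fun _ => (1:ℝ)) with hf₁def
  set f₂ : EuclideanSpace ℝ (Fin n) → ℝ := B.indicator (fun y => ‖y‖ ^ n) with hf₂def
  have mf₁ : Measurable f₁ := measurable_const.indicator measurableSet_ball
  have mf₂ : Measurable f₂ := (measurable_norm.pow_const n).indicator measurableSet_ball
  set φ : EuclideanSpace ℝ (Fin n) → ℝ := fun x => ∫ y in ball (0 : EuclideanSpace ℝ (Fin n)) ‖x‖, b y with hφdef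
  set Ir : ℝ := ∫ y in B, b y with hIrdef
  have hbint : IntegrableOn b B volume :=
    (hb.integrableOn_isCompact (isCompact_closedBall 0 r)).mono_set ball_subset_closedBall
  have keyA : ∀ x ∈ B, x ≠ (0 : EuclideanSpace ℝ (Fin n)) →
      ‖x‖ ^ n * hardyComm n b f₁ x = w * ‖x‖ ^ n * b x - φ x := by
    intro x hx hx0
    have hxn : (0:ℝ) < ‖x‖ := norm_pos_iff.mpr hx0
    have hsub : ball (0 : EuclideanSpace ℝ (Fin n)) ‖x‖ ⊆ B := ball_subset_ball (mem_ball_zero_iff.mp hx).le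
    have e1 : (∫ t in ball (0 : EuclideanSpace ℝ (Fin n)) ‖x‖, f₁ t) = ‖x‖ ^ n * w := by
      rw [setIntegral_congr_fun measurableSet_ball (g := fun _ => (1:ℝ))
        (fun t ht => Set.indicator_of_mem (hsub ht) _)]
      rw [setIntegral_const, smul_eq_mul, mul_one, measureReal_def, Measure.addHaar_ball_of_pos _ _ hxn,
        finrank_euclideanSpace_fin, ENNReal.toReal_mul, ENNReal.toReal_ofReal (by positivity),
        hwdef]
    have e2 : (∫ t in ball (0 : EuclideanSpace ℝ (Fin n)) ‖x‖, b t * f₁ t) = φ x := by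
      refine setIntegral_congr_fun measurableSet_ball fun t ht => ?_
      simp [hf₁def, Set.indicator_of_mem (hsub ht)]
    have hxnn : (‖x‖:ℝ) ^ n ≠ 0 := by positivity
    simp only [hardyComm, nHardy, e1, e2]
    field_simp
  have keyB : ∀ x ∈ B, x ≠ (0 : EuclideanSpace ℝ (Fin n)) →
      dualHardyComm n b f₂ x = (v - w * ‖x‖ ^ n) * b x - (Ir - φ x) := by
    intro x hx hx0
    have hxn : (0:ℝ) < ‖x‖ := norm_pos_iff.mpr hx0
    have hsub : ball (0 : EuclideanSpace ℝ (Fin n)) ‖x‖ ⊆ B := ball_subset_ball (mem_ball_zero_iff.mp hx).le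
    have hset : (ball (0 : EuclideanSpace ℝ (Fin n)) ‖x‖)ᶜ ∩ B = B \ ball (0 : EuclideanSpace ℝ (Fin n)) ‖x‖ := by
      rw [Set.diff_eq, Set.inter_comm]
    have e1 : nDualHardy n f₂ x = v - w * ‖x‖ ^ n := by
      rw [nDualHardy, setIntegral_congr_fun measurableSet_ball.compl
        (g := B.indicator (fun _ => (1:ℝ))) ?_]
      · rw [setIntegral_indicator measurableSet_ball, setIntegral_const, smul_eq_mul, mul_one,
          hset, measureReal_def, measure_diff hsub measurableSet_ball.nullMeasurableSet measure_ball_lt_top.ne,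
          ENNReal.toReal_sub_of_le (measure_mono hsub) hVtop,
          Measure.addHaar_ball_of_pos _ _ hxn, finrank_euclideanSpace_fin, ENNReal.toReal_mul,
          ENNReal.toReal_ofReal (by positivity), ← hvdef, ← hwdef]
        ring
      · intro t ht
        have htx : ‖x‖ ≤ ‖t‖ := not_lt.mp (fun h => ht (mem_ball_zero_iff.mpr h))
        have ht0 : (‖t‖:ℝ) ^ n ≠ 0 := pow_ne_zero n (ne_of_gt (lt_of_lt_of_le hxn htx))
        by_cases htB : t ∈ B
        · simp [hf₂def, Set.indicator_of_mem htB, div_self ht0]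
        · simp [hf₂def, Set.indicator_of_notMem htB]
    have e2 : nDualHardy n (fun y => b y * f₂ y) x = Ir - φ x := by
      rw [nDualHardy, setIntegral_congr_fun measurableSet_ball.compl
        (g := B.indicator b) ?_]
      · rw [setIntegral_indicator measurableSet_ball, hset,
          integral_diff measurableSet_ball hbint hsub, hIrdef, hφdef]
      · intro t ht
        have htx : ‖x‖ ≤ ‖t‖ := not_lt.mp (fun h => ht (mem_ball_zero_iff.mpr h))
        have ht0 : (‖t‖:ℝ) ^ n ≠ 0 := pow_ne_zero n (ne_of_gt (lt_of_lt_of_le hxn htx))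
        by_cases htB : t ∈ B
        · simp only [hf₂def, Set.indicator_of_mem htB]
          field_simp
        · simp [hf₂def, Set.indicator_of_notMem htB]
    rw [dualHardyComm, e1, e2]
    ring
  -- nontriviality / no atoms
  haveI hnontriv : Nontrivial (EuclideanSpace ℝ (Fin n)) :=
    Module.nontrivial_of_finrank_pos (R := ℝ)
      (by rw [finrank_euclideanSpace_fin]; exact hn)
  have h0 : ∀ᵐ x : EuclideanSpace ℝ (Fin n), x ≠ (0 : EuclideanSpace ℝ (Fin n)) := by
    rw [ae_iff]
    simpa [Set.setOf_eq_eq_singleton, not_not] using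
      (measure_singleton (0 : EuclideanSpace ℝ (Fin n)) (μ := volume))
  have hball_avg : ballAvg n b r = v⁻¹ * Ir := by
    rw [ballAvg, setAverage_eq, smul_eq_mul, ← hBdef, measureReal_def, ← hVdef, ← hvdef, ← hIrdef]
  set g₁ : EuclideanSpace ℝ (Fin n) → ℝ := fun x => ‖x‖ ^ n * hardyComm n b f₁ x with hg₁def
  set g₂ : EuclideanSpace ℝ (Fin n) → ℝ := fun x => dualHardyComm n b f₂ x with hg₂def
  have hkey : B.indicator (fun x => b x - ballAvg n b r)
      =ᵐ[volume] fun x => v⁻¹ * (B.indicator g₁ x + B.indicator g₂ x) := by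
    filter_upwards [h0] with x hx0
    by_cases hxB : x ∈ B
    · rw [Set.indicator_of_mem hxB, Set.indicator_of_mem hxB, Set.indicator_of_mem hxB,
        hball_avg]
      have hsum : g₁ x + g₂ x = v * b x - Ir := by
        rw [hg₁def, hg₂def]
        simp only
        rw [keyA x hxB hx0, keyB x hxB hx0]
        ring
      rw [hsum]
      field_simp
    · simp [Set.indicator_of_notMem hxB]
  -- measurability
  have hφm : AEStronglyMeasurable φ volume := aux_phi_meas b hb.aestronglyMeasurable
  have hindg₁ : AEStronglyMeasurable (B.indicator g₁) volume := by
    have haux : AEStronglyMeasurable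
        (fun x : EuclideanSpace ℝ (Fin n) => w * ‖x‖ ^ n * b x - φ x) volume :=
      ((aestronglyMeasurable_const.mul
        (measurable_norm.pow_const n).aestronglyMeasurable).mul
        hb.aestronglyMeasurable).sub hφm
    have heq : B.indicator (fun x => w * ‖x‖ ^ n * b x - φ x) =ᵐ[volume] B.indicator g₁ := by
      filter_upwards [h0] with x hx0
      by_cases hxB : x ∈ B
      · rw [Set.indicator_of_mem hxB, Set.indicator_of_mem hxB]
        exact (keyA x hxB hx0).symm
      · simp [Set.indicator_of_notMem hxB]
    exact (haux.indicator measurableSet_ball).congr heq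
  have hindg₂ : AEStronglyMeasurable (B.indicator g₂) volume := by
    have haux : AEStronglyMeasurable
        (fun x : EuclideanSpace ℝ (Fin n) => (v - w * ‖x‖ ^ n) * b x - (Ir - φ x)) volume :=
      ((aestronglyMeasurable_const.sub (aestronglyMeasurable_const.mul
        (measurable_norm.pow_const n).aestronglyMeasurable)).mul
        hb.aestronglyMeasurable).sub (aestronglyMeasurable_const.sub hφm)
    have heq : B.indicator (fun x => (v - w * ‖x‖ ^ n) * b x - (Ir - φ x))
        =ᵐ[volume] B.indicator g₂ := by
      filter_upwards [h0] with x hx0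
      by_cases hxB : x ∈ B
      · rw [Set.indicator_of_mem hxB, Set.indicator_of_mem hxB]
        exact (keyB x hxB hx0).symm
      · simp [Set.indicator_of_notMem hxB]
    exact (haux.indicator measurableSet_ball).congr heq
  -- norms of the test functions
  have hf₁norm : eLpNorm f₁ (ENNReal.ofReal p) volume = V ^ (1/p) := by
    rw [hf₁def, eLpNorm_indicator_const measurableSet_ball hP0 ENNReal.ofReal_ne_top]
    simp [ENNReal.toReal_ofReal hp0.le, ← hVdef, ← hBdef]
  have hf₂norm : eLpNorm f₂ (ENNReal.ofReal p) volume ≤ ENNReal.ofReal (r^n) * V ^ (1/p) := by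
    have hpt : ∀ x, ‖f₂ x‖ ≤ ‖((r^n : ℝ) • f₁) x‖ := by
      intro x
      by_cases hxB : x ∈ B
      · rw [hf₂def, hf₁def]
        simp only [Set.indicator_of_mem hxB, Pi.smul_apply, smul_eq_mul, mul_one]
        rw [Real.norm_eq_abs, Real.norm_eq_abs, abs_of_nonneg (by positivity),
          abs_of_nonneg (by positivity)]
        exact pow_le_pow_left₀ (norm_nonneg x) (mem_ball_zero_iff.mp hxB).le n
      · rw [hf₂def]
        simp only [Set.indicator_of_notMem hxB, norm_zero]
        positivity
    calc eLpNorm f₂ (ENNReal.ofReal p) volume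
        ≤ eLpNorm ((r^n : ℝ) • f₁) (ENNReal.ofReal p) volume := eLpNorm_mono hpt
      _ = ‖(r^n : ℝ)‖₊ • eLpNorm f₁ (ENNReal.ofReal p) volume := eLpNorm_const_smul _ _ _ _
      _ = ENNReal.ofReal (r^n) * V ^ (1/p) := by
          rw [hf₁norm, ENNReal.smul_def, smul_eq_mul, ← enorm_eq_nnnorm, Real.enorm_eq_ofReal (by positivity)]
  -- bounds on the two pieces
  have hg₁norm : eLpNorm (B.indicator g₁) (ENNReal.ofReal q) volume ≤
      ENNReal.ofReal (r^n) * (ENNReal.ofReal M * eLpNorm f₁ (ENNReal.ofReal p) volume) := by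
    have hpt : ∀ x, ‖B.indicator g₁ x‖ ≤ ‖((r^n : ℝ) • hardyComm n b f₁) x‖ := by
      intro x
      by_cases hxB : x ∈ B
      · rw [Set.indicator_of_mem hxB, hg₁def]
        simp only [Pi.smul_apply, smul_eq_mul, Real.norm_eq_abs, abs_mul]
        have h1 : |(‖x‖:ℝ)^n| ≤ |(r:ℝ)^n| := by
          rw [abs_of_nonneg (by positivity), abs_of_nonneg (by positivity)]
          exact pow_le_pow_left₀ (norm_nonneg x) (mem_ball_zero_iff.mp hxB).le n
        exact mul_le_mul_of_nonneg_right h1 (abs_nonneg _)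
      · simp only [Set.indicator_of_notMem hxB, norm_zero, Pi.smul_apply, smul_eq_mul,
          Real.norm_eq_abs, abs_mul]
        positivity
    calc eLpNorm (B.indicator g₁) (ENNReal.ofReal q) volume
        ≤ eLpNorm ((r^n:ℝ) • hardyComm n b f₁) (ENNReal.ofReal q) volume := eLpNorm_mono hpt
      _ = ‖(r^n:ℝ)‖₊ • eLpNorm (hardyComm n b f₁) (ENNReal.ofReal q) volume :=
          eLpNorm_const_smul _ _ _ _
      _ ≤ ENNReal.ofReal (r^n) * (ENNReal.ofReal M * eLpNorm f₁ (ENNReal.ofReal p) volume) := by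
          rw [ENNReal.smul_def, smul_eq_mul, ← enorm_eq_nnnorm, Real.enorm_eq_ofReal (by positivity)]
          exact mul_le_mul_right (H1 f₁ mf₁) _
  have hg₂norm : eLpNorm (B.indicator g₂) (ENNReal.ofReal q) volume ≤
      ENNReal.ofReal M * (ENNReal.ofReal (r^n) * V ^ (1/p)) :=
    le_trans (eLpNorm_indicator_le _) (le_trans (H2 f₂ mf₂) (mul_le_mul_right hf₂norm _))
  -- main estimate
  have main : indNorm n q B (fun x => b x - ballAvg n b r) ≤
      ENNReal.ofReal v⁻¹ * (eLpNorm (B.indicator g₁) (ENNReal.ofReal q) volume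
        + eLpNorm (B.indicator g₂) (ENNReal.ofReal q) volume) := by
    rw [indNorm, eLpNorm_congr_ae hkey]
    rw [show (fun x => v⁻¹ * (B.indicator g₁ x + B.indicator g₂ x))
        = (v⁻¹ : ℝ) • (B.indicator g₁ + B.indicator g₂) from rfl]
    rw [eLpNorm_const_smul, Real.enorm_eq_ofReal (inv_nonneg.mpr hv0.le)]
    exact mul_le_mul_right (eLpNorm_add_le hindg₁ hindg₂ hQ1) _
  have hind1 : indNorm n q B (1 : EuclideanSpace ℝ (Fin n) → ℝ) = V ^ (1/q) := by
    rw [indNorm, show ((1 : EuclideanSpace ℝ (Fin n) → ℝ)) = fun _ => (1:ℝ) from rfl,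
      eLpNorm_indicator_const measurableSet_ball hQ0 ENNReal.ofReal_ne_top]
    simp [ENNReal.toReal_ofReal hq0.le, ← hVdef, ← hBdef]
  have hVp : V ^ (1/p) = ENNReal.ofReal (v ^ lam) * V ^ (1/q) := by
    have hexp : 1/p = lam + 1/q := by rw [hlam]; ring
    rw [hexp, ENNReal.rpow_add _ _ hVne hVtop]
    congr 1
    rw [show V = ENNReal.ofReal v from (ENNReal.ofReal_toReal hVtop).symm]
    exact ENNReal.ofReal_rpow_of_pos hv0
  have hvlam : (0:ℝ) ≤ v ^ lam := Real.rpow_nonneg hv0.le lam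
  have expand : ENNReal.ofReal (v⁻¹ * (r^n * (M * v^lam) + M * (r^n * v^lam)))
      = ENNReal.ofReal v⁻¹ * (ENNReal.ofReal (r^n) * (ENNReal.ofReal M * ENNReal.ofReal (v^lam))
        + ENNReal.ofReal M * (ENNReal.ofReal (r^n) * ENNReal.ofReal (v^lam))) := by
    rw [ENNReal.ofReal_mul (inv_nonneg.mpr hv0.le),
      ENNReal.ofReal_add (by positivity) (by positivity),
      ENNReal.ofReal_mul (by positivity : (0:ℝ) ≤ r^n), ENNReal.ofReal_mul hM,
      ENNReal.ofReal_mul hM, ENNReal.ofReal_mul (by positivity : (0:ℝ) ≤ r^n)]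
  have realeq : v⁻¹ * (r^n * (M * v^lam) + M * (r^n * v^lam)) = v^lam * (2/w * M) := by
    have hrn : (0:ℝ) < r^n := by positivity
    rw [hv]
    field_simp
    ring
  calc indNorm n q B (fun x => b x - ballAvg n b r)
      ≤ ENNReal.ofReal v⁻¹ *
          (ENNReal.ofReal (r^n) * (ENNReal.ofReal M * eLpNorm f₁ (ENNReal.ofReal p) volume)
          + ENNReal.ofReal M * (ENNReal.ofReal (r^n) * V ^ (1/p))) :=
        le_trans main (mul_le_mul_right (add_le_add hg₁norm hg₂norm) _)
    _ = (ENNReal.ofReal v⁻¹ *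
          (ENNReal.ofReal (r^n) * (ENNReal.ofReal M * ENNReal.ofReal (v^lam))
          + ENNReal.ofReal M * (ENNReal.ofReal (r^n) * ENNReal.ofReal (v^lam)))) * V ^ (1/q) := by
        rw [hf₁norm, hVp]; ring
    _ = ENNReal.ofReal (v ^ lam * (2/w * M)) * indNorm n q B 1 := by
        rw [hind1, ← expand, realeq]
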